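/- arXiv:math/9612214 — 3 statements merged into one kernel-verified Lean document; each statement's English description precedes it below -/
import Mathlib

section
/- A group that acts freely and without inversions on a nonempty tree is a free group. -/
namespace Stmt1Aux

attribute [local instance] Classical.propDecidable Classical.decEq

open CategoryTheory SimpleGraph

universe uG uV

section Defs

variable {G : Type uG} [Group G] {V : Type uV} [MulAction G V]

variable (G V) in
def vSetoid : Setoid V where
  r a b := ∃ g : G, g • b = a
  iseqv := by
    refine ⟨fun a => ⟨1, one_smul _ _⟩, ?_, ?_⟩
    · rintro a b ⟨g, rfl⟩; exact ⟨g⁻¹, by simp⟩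
    · rintro a b c ⟨g, rfl⟩ ⟨k, rfl⟩; exact ⟨g * k, by rw [mul_smul]⟩

variable (G V) in
def Orb : Type uV := Quotient (vSetoid G V)

def mkO (a : V) : Orb G V := Quotient.mk (vSetoid G V) a

noncomputable def rep (x : Orb G V) : V := Quotient.out x

@[simp] lemma mkO_rep (x : Orb G V) : mkO (rep x) = x := Quotient.out_eq x

@[simp] lemma mkO_smul (g : G) (a : V) : mkO (G := G) (g • a) = mkO a :=
  Quotient.sound ⟨g, rfl⟩

lemma exists_sig (a : V) : ∃ g : G, g • rep (mkO (G := G) a) = a := by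
  obtain ⟨g, hg⟩ := Quotient.mk_out (s := vSetoid G V) a
  exact ⟨g⁻¹, by rw [rep, mkO, ← hg]; simp⟩

noncomputable def sig (a : V) : G := (exists_sig (G := G) a).choose

@[simp] lemma sig_spec (a : V) : sig (G := G) a • rep (mkO (G := G) a) = a :=
  (exists_sig (G := G) a).choose_spec

variable (hf : ∀ (g : G) (v : V), g • v = v → g = 1)
include hf

lemma smul_cancel {g k : G} {v : V} (h : g • v = k • v) : g = k := by
  have h2 : (k⁻¹ * g) • v = v := by rw [mul_smul, h, inv_smul_smul]
  exact (inv_mul_eq_one.mp (hf _ _ h2)).symm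

lemma sig_smul (g : G) (a : V) : sig (g • a) = g * sig a := by
  apply smul_cancel hf (v := rep (mkO (G := G) a))
  have h1 := sig_spec (G := G) (g • a)
  rw [mkO_smul] at h1
  rw [h1, mul_smul, sig_spec]

lemma sig_rep (x : Orb G V) : sig (G := G) (rep x) = 1 := by
  apply hf _ (rep x)
  have := sig_spec (G := G) (rep x)
  rwa [mkO_rep] at this

end Defs

section Edges

variable {G : Type uG} [Group G] {V : Type uV} [MulAction G V] (T : SimpleGraph V)

def Ed : Type uV := {p : V × V // T.Adj p.1 p.2}

variable (G) in
def eSetoid : Setoid (Ed T) where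
  r d d' := ∃ g : G, g • d'.1.1 = d.1.1 ∧ g • d'.1.2 = d.1.2
  iseqv := by
    refine ⟨fun d => ⟨1, by simp⟩, ?_, ?_⟩
    · rintro ⟨⟨a, b⟩, h⟩ ⟨⟨a', b'⟩, h'⟩ ⟨g, h1, h2⟩
      dsimp at h1 h2
      exact ⟨g⁻¹, by simp [← h1, ← h2]⟩
    · rintro ⟨⟨a, b⟩, h⟩ ⟨⟨a', b'⟩, h'⟩ ⟨⟨a'', b''⟩, h''⟩ ⟨g, h1, h2⟩ ⟨k, k1, k2⟩
      dsimp at *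
      exact ⟨g * k, by simp only [mul_smul, k1, k2, h1, h2, and_self]⟩

variable (G) in
def EE : Type uV := Quotient (eSetoid G T)

variable {T} in
def mkE {a b : V} (h : T.Adj a b) : EE G T := Quotient.mk (eSetoid G T) ⟨(a, b), h⟩

variable {T} in
lemma mkE_smul {g : G} {a b : V} (h : T.Adj a b) (h' : T.Adj (g • a) (g • b)) :
    mkE (G := G) h' = mkE h := Quotient.sound ⟨g, rfl, rfl⟩

variable (G) in
def sE : EE G T → EE G T :=
  Quotient.map (fun d => ⟨(d.1.2, d.1.1), d.2.symm⟩)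
    (by rintro ⟨⟨a, b⟩, h⟩ ⟨⟨a', b'⟩, h'⟩ ⟨g, h1, h2⟩; exact ⟨g, h2, h1⟩)

variable {T} in
@[simp] lemma sE_mkE {a b : V} (h : T.Adj a b) : sE G T (mkE h) = mkE h.symm := rfl

@[simp] lemma sE_sE (e : EE G T) : sE G T (sE G T e) = e := by
  induction e using Quotient.ind
  rfl

variable (G) in
def piS : EE G T → Orb G V :=
  Quotient.lift (fun d => mkO d.1.1)
    (by rintro ⟨⟨a, b⟩, h⟩ ⟨⟨a', b'⟩, h'⟩ ⟨g, h1, h2⟩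
        dsimp at h1 h2 ⊢
        simp only [← h1, mkO_smul])

variable (G) in
def piT : EE G T → Orb G V :=
  Quotient.lift (fun d => mkO d.1.2)
    (by rintro ⟨⟨a, b⟩, h⟩ ⟨⟨a', b'⟩, h'⟩ ⟨g, h1, h2⟩
        dsimp at h1 h2 ⊢
        simp only [← h2, mkO_smul])

variable {T} in
@[simp] lemma piS_mkE {a b : V} (h : T.Adj a b) : piS G T (mkE h) = mkO a := rfl

variable {T} in
@[simp] lemma piT_mkE {a b : V} (h : T.Adj a b) : piT G T (mkE h) = mkO b := rfl

noncomputable def eltE (hf : ∀ (g : G) (v : V), g • v = v → g = 1) : EE G T → G :=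
  Quotient.lift (fun d => (sig (G := G) d.1.1)⁻¹ * sig d.1.2)
    (by rintro ⟨⟨a, b⟩, h⟩ ⟨⟨a', b'⟩, h'⟩ ⟨g, h1, h2⟩
        dsimp at h1 h2 ⊢
        simp only [← h1, ← h2, sig_smul hf]
        group)

variable {T} in
lemma eltE_mkE (hf : ∀ (g : G) (v : V), g • v = v → g = 1) {a b : V} (h : T.Adj a b) :
    eltE T hf (mkE h) = (sig (G := G) a)⁻¹ * sig b := rfl

variable (G) in
/-- the setoid pairing an edge orbit with its reversal -/
def pSetoid : Setoid (EE G T) where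
  r o o' := o' = o ∨ o' = sE G T o
  iseqv := by
    refine ⟨fun o => Or.inl rfl, ?_, ?_⟩
    · rintro o o' (rfl | rfl)
      · exact Or.inl rfl
      · exact Or.inr (by simp)
    · rintro o o' o'' (rfl | rfl) (rfl | rfl) <;> simp

variable (G) in
def PosE (e : EE G T) : Prop := (Quotient.mk (pSetoid G T) e).out = e

variable {T}

lemma sE_ne (hnoinv : ∀ (g : G) (u v : V), T.Adj u v → ¬(g • u = v ∧ g • v = u))
    (e : EE G T) : sE G T e ≠ e := by
  induction e using Quotient.ind with
  | _ d =>
    obtain ⟨⟨a, b⟩, h⟩ := d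
    intro hcon
    obtain ⟨g, h1, h2⟩ := Quotient.exact hcon
    dsimp at h1 h2
    exact hnoinv g a b h ⟨h1, h2⟩

lemma posE_not (hnoinv : ∀ (g : G) (u v : V), T.Adj u v → ¬(g • u = v ∧ g • v = u))
    (e : EE G T) : PosE G T (sE G T e) ↔ ¬ PosE G T e := by
  have hmk : Quotient.mk (pSetoid G T) (sE G T e) = Quotient.mk (pSetoid G T) e :=
    Quotient.sound (Or.inr (sE_sE T e).symm)
  have hout : (Quotient.mk (pSetoid G T) e).out = e ∨
      (Quotient.mk (pSetoid G T) e).out = sE G T e := by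
    have := Quotient.mk_out (s := pSetoid G T) e
    rcases this with h | h
    · exact Or.inl h.symm
    · right
      have := congrArg (sE G T) h
      rw [sE_sE] at this
      exact this.symm
  have hne := sE_ne hnoinv e
  unfold PosE
  rw [hmk]
  rcases hout with h | h <;> rw [h] <;> simp_all
  exact fun hcon => hne hcon.symm

end Edges

section Gpd

variable (G : Type uG) [Group G] (V : Type uV) [MulAction G V]

def Gd : Type (max uG uV) := ULift.{uG} (Orb G V)

instance : Groupoid (Gd G V) where
  Hom _ _ := ULift.{uV} G
  id _ := ⟨1⟩
  comp f g := ⟨f.down * g.down⟩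
  id_comp f := by cases f; exact congrArg ULift.up (one_mul _)
  comp_id f := by cases f; exact congrArg ULift.up (mul_one _)
  assoc f g h := congrArg ULift.up (mul_assoc _ _ _)
  inv f := ⟨f.down⁻¹⟩
  inv_comp f := congrArg ULift.up (inv_mul_cancel _)
  comp_inv f := congrArg ULift.up (mul_inv_cancel _)

variable {G V}

def toGd (x : Orb G V) : Gd G V := ⟨x⟩

noncomputable def chi (a b : V) : toGd (mkO (G := G) a) ⟶ toGd (mkO (G := G) b) :=
  ⟨(sig a)⁻¹ * sig b⟩

lemma chi_comp (a b c : V) : chi (G := G) a b ≫ chi b c = chi a c := by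
  apply congrArg ULift.up
  dsimp [chi]
  group

lemma chi_id (a : V) : chi (G := G) a a = 𝟙 (toGd (mkO (G := G) a)) := by
  apply congrArg ULift.up
  show (sig (G := G) a)⁻¹ * sig a = 1
  group

end Gpd

section Quiv

variable {G : Type uG} [Group G] {V : Type uV} [MulAction G V] (T : SimpleGraph V)

def Arr (x y : Gd G V) : Type (max uG uV) :=
  ULift.{uG} {e : EE G T // PosE G T e ∧ piS G T e = x.down ∧ piT G T e = y.down}

noncomputable def ofArr (hf : ∀ (g : G) (v : V), g • v = v → g = 1) {x y : Gd G V}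
    (e : Arr T x y) : x ⟶ y := ⟨eltE T hf e.down.1⟩

def genArr {a b : V} (h : T.Adj a b) (hp : PosE G T (mkE h)) :
    Arr T (toGd (mkO (G := G) a)) (toGd (mkO (G := G) b)) := ⟨⟨mkE h, hp, rfl, rfl⟩⟩

lemma ofArr_genArr (hf : ∀ (g : G) (v : V), g • v = v → g = 1) {a b : V} (h : T.Adj a b)
    (hp : PosE G T (mkE h)) : ofArr T hf (genArr T h hp) = chi a b := rfl

end Quiv

section Phi

set_option linter.unusedSectionVars false

attribute [local instance] Classical.propDecidable

variable {G : Type uG} [Group G] {V : Type uV} [MulAction G V] {T : SimpleGraph V}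
variable (hnoinv : ∀ (g : G) (u v : V), T.Adj u v → ¬(g • u = v ∧ g • v = u))
variable {X : Type (max uG uV)} [Group X]
variable (f : ∀ ⦃x y : Gd G V⦄, Arr T x y → X)

lemma fCongr {x y x' y' : Gd G V} (hx : x = x') (hy : y = y') {e e' : EE G T} (he : e = e')
    (pf : PosE G T e ∧ piS G T e = x.down ∧ piT G T e = y.down)
    (pf' : PosE G T e' ∧ piS G T e' = x'.down ∧ piT G T e' = y'.down) :
    f (⟨⟨e, pf⟩⟩ : Arr T x y) = f (⟨⟨e', pf'⟩⟩ : Arr T x' y') := by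
  subst hx; subst hy; subst he; rfl

noncomputable def phi {a b : V} (h : T.Adj a b) : X :=
  if hp : PosE G T (mkE h) then (f (genArr T h hp))⁻¹
  else f (genArr T h.symm (by
    rw [← sE_mkE h]
    exact (posE_not hnoinv _).mpr hp))

lemma phi_symm {a b : V} (h : T.Adj a b) :
    phi hnoinv f h.symm = (phi hnoinv f h)⁻¹ := by
  by_cases hp : PosE G T (mkE h)
  · have hq : ¬ PosE G T (mkE h.symm) := by
      rw [← sE_mkE, posE_not hnoinv]
      simpa using hp
    rw [phi, phi, dif_neg hq, dif_pos hp, inv_inv]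
  · have hq : PosE G T (mkE h.symm) := by
      rw [← sE_mkE h]
      exact (posE_not hnoinv _).mpr hp
    rw [phi, phi, dif_pos hq, dif_neg hp]

lemma phi_smul (g : G) {a b : V} (h : T.Adj a b) (h' : T.Adj (g • a) (g • b)) :
    phi hnoinv f h' = phi hnoinv f h := by
  have he : mkE (G := G) h' = mkE h := mkE_smul h h'
  have hes : mkE (G := G) h'.symm = mkE h.symm := mkE_smul h.symm h'.symm
  by_cases hp : PosE G T (mkE h)
  · rw [phi, phi, dif_pos hp, dif_pos (he ▸ hp)]
    exact congrArg (·⁻¹) (fCongr f (congrArg toGd (mkO_smul g a)) (congrArg toGd (mkO_smul g b)) he _ _)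
  · rw [phi, phi, dif_neg (fun hc => hp (he ▸ hc)), dif_neg hp]
    exact fCongr f (congrArg toGd (mkO_smul g b)) (congrArg toGd (mkO_smul g a)) hes _ _

end Phi

section Walks

set_option linter.unusedSectionVars false

open SimpleGraph

variable {G : Type uG} [Group G] {V : Type uV} [MulAction G V] {T : SimpleGraph V}
variable (hnoinv : ∀ (g : G) (u v : V), T.Adj u v → ¬(g • u = v ∧ g • v = u))
variable {X : Type (max uG uV)} [Group X]
variable (f : ∀ ⦃x y : Gd G V⦄, Arr T x y → X)

noncomputable def wprod : {a b : V} → T.Walk a b → X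
  | _, _, .nil => 1
  | _, _, .cons h p => phi hnoinv f h * wprod p

@[simp] lemma wprod_nil {a : V} : wprod hnoinv f (Walk.nil : T.Walk a a) = 1 := rfl

@[simp] lemma wprod_cons {a b c : V} (h : T.Adj a b) (p : T.Walk b c) :
    wprod hnoinv f (.cons h p) = phi hnoinv f h * wprod hnoinv f p := rfl

lemma wprod_append {a b c : V} (p : T.Walk a b) (q : T.Walk b c) :
    wprod hnoinv f (p.append q) = wprod hnoinv f p * wprod hnoinv f q := by
  induction p with
  | nil => simp
  | cons h p ih => simp [Walk.cons_append, ih, mul_assoc]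

variable (hconn : T.Connected) (hacyc : T.IsAcyclic)
include hacyc

noncomputable def cc (a b : V) : X :=
  wprod hnoinv f (((hconn.preconnected a b).some.toPath : T.Path a b) : T.Walk a b)

lemma wprod_path {a b : V} (p : T.Walk a b) (hp : p.IsPath) :
    wprod hnoinv f p = cc hnoinv f hconn a b := by
  have h2 := hacyc.path_unique ⟨p, hp⟩ ((hconn.preconnected a b).some.toPath)
  rw [cc]
  exact congrArg (wprod hnoinv f) (congrArg Subtype.val h2)

lemma cc_adj {a b d : V} (h : T.Adj a b) :
    cc hnoinv f hconn a d = phi hnoinv f h * cc hnoinv f hconn b d := by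
  set q := (hconn.preconnected b d).some.toPath with hq
  have hcc : cc hnoinv f hconn b d = wprod hnoinv f (q : T.Walk b d) := rfl
  by_cases ha : a ∈ (q : T.Walk b d).support
  · have htake : (q : T.Walk b d).takeUntil a ha = Walk.cons h.symm Walk.nil := by
      have h1 : ((q : T.Walk b d).takeUntil a ha).IsPath := q.2.takeUntil ha
      have h2 : (Walk.cons h.symm Walk.nil : T.Walk b a).IsPath := by
        simp [Walk.cons_isPath_iff, h.ne']
      exact congrArg Subtype.val (hacyc.path_unique ⟨_, h1⟩ ⟨_, h2⟩)
    have hdrop : ((q : T.Walk b d).dropUntil a ha).IsPath := q.2.dropUntil ha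
    have h3 : wprod hnoinv f (q : T.Walk b d)
        = phi hnoinv f h.symm * wprod hnoinv f ((q : T.Walk b d).dropUntil a ha) := by
      conv_lhs => rw [← Walk.take_spec (q : T.Walk b d) ha]
      rw [wprod_append, htake]
      simp [mul_assoc]
    rw [hcc, h3, phi_symm hnoinv f h, wprod_path hnoinv f hconn hacyc _ hdrop]
    group
  · have hpath : (Walk.cons h (q : T.Walk b d)).IsPath := by
      rw [Walk.cons_isPath_iff]; exact ⟨q.2, ha⟩
    rw [hcc, ← wprod_cons, wprod_path hnoinv f hconn hacyc _ hpath]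

lemma wprod_eq {a b : V} (p : T.Walk a b) : wprod hnoinv f p = cc hnoinv f hconn a b := by
  induction p with
  | nil => exact wprod_path hnoinv f hconn hacyc _ Walk.IsPath.nil
  | cons h p ih =>
    rw [wprod_cons, ih, ← cc_adj hnoinv f hconn hacyc h]

lemma cc_refl (a : V) : cc hnoinv f hconn a a = (1 : X) :=
  (wprod_eq hnoinv f hconn hacyc (Walk.nil : T.Walk a a)).symm

lemma cc_trans (a b d : V) :
    cc hnoinv f hconn a b * cc hnoinv f hconn b d = cc hnoinv f hconn a d := by
  have h1 := wprod_eq hnoinv f hconn hacyc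
    (((hconn.preconnected a b).some).append ((hconn.preconnected b d).some))
  rw [wprod_append, wprod_eq hnoinv f hconn hacyc, wprod_eq hnoinv f hconn hacyc] at h1
  exact h1

variable (hsimp : ∀ (g : G) (u v : V), T.Adj u v → T.Adj (g • u) (g • v))
include hsimp

noncomputable def smulWalk (g : G) : {a b : V} → T.Walk a b → T.Walk (g • a) (g • b)
  | _, _, .nil => Walk.nil
  | _, _, .cons h p => Walk.cons (hsimp g _ _ h) (smulWalk g p)

lemma wprod_smulWalk (g : G) {a b : V} (p : T.Walk a b) :
    wprod hnoinv f (smulWalk hsimp g p) = wprod hnoinv f p := by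
  induction p with
  | nil => rfl
  | cons h p ih =>
    rw [smulWalk, wprod_cons, wprod_cons, ih, phi_smul hnoinv f g h (hsimp g _ _ h)]

lemma cc_smul (g : G) (a b : V) :
    cc hnoinv f hconn (g • a) (g • b) = cc hnoinv f hconn a b := by
  rw [← wprod_eq hnoinv f hconn hacyc (smulWalk hsimp g ((hconn.preconnected a b).some)),
    wprod_smulWalk hnoinv f hacyc hsimp, wprod_eq hnoinv f hconn hacyc]

end Walks

section Func

set_option linter.unusedSectionVars false

open SimpleGraph

variable {G : Type uG} [Group G] {V : Type uV} [MulAction G V] {T : SimpleGraph V}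
variable {X : Type (max uG uV)} [Group X]

noncomputable def Ff
    (hnoinv : ∀ (g : G) (u v : V), T.Adj u v → ¬(g • u = v ∧ g • v = u))
    (hsimp : ∀ (g : G) (u v : V), T.Adj u v → T.Adj (g • u) (g • v))
    (hconn : T.Connected) (hacyc : T.IsAcyclic)
    (f : ∀ ⦃x y : Gd G V⦄, Arr T x y → X) : Gd G V ⥤ SingleObj X where
  obj _ := SingleObj.star X
  map {x y} g := cc hnoinv f hconn (g.down • rep y.down) (rep x.down)
  map_id x := by
    show cc hnoinv f hconn ((1 : G) • rep x.down) (rep x.down) = 1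
    rw [one_smul, cc_refl hnoinv f hconn hacyc]
  map_comp {x y z} fm gm := by
    show cc hnoinv f hconn ((fm.down * gm.down) • rep z.down) (rep x.down)
      = cc hnoinv f hconn (gm.down • rep z.down) (rep y.down)
        * cc hnoinv f hconn (fm.down • rep y.down) (rep x.down)
    rw [← cc_smul hnoinv f hconn hacyc hsimp fm.down (gm.down • rep z.down) (rep y.down),
      smul_smul]
    exact (cc_trans hnoinv f hconn hacyc _ _ _).symm

variable (hf : ∀ (g : G) (v : V), g • v = v → g = 1)
variable (hnoinv : ∀ (g : G) (u v : V), T.Adj u v → ¬(g • u = v ∧ g • v = u))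
variable (hsimp : ∀ (g : G) (u v : V), T.Adj u v → T.Adj (g • u) (g • v))
variable (hconn : T.Connected) (hacyc : T.IsAcyclic)
variable (f : ∀ ⦃x y : Gd G V⦄, Arr T x y → X)

include hacyc in
lemma cc_single {a b : V} (h : T.Adj a b) :
    cc hnoinv f hconn a b = phi hnoinv f h := by
  have h1 := wprod_eq hnoinv f hconn hacyc (Walk.cons h Walk.nil)
  rw [wprod_cons, wprod_nil, mul_one] at h1
  exact h1.symm

lemma Ff_chi (a b : V) :
    (Ff hnoinv hsimp hconn hacyc f).map (chi a b) = cc hnoinv f hconn b a := by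
  show cc hnoinv f hconn (((sig a)⁻¹ * sig b) • rep (mkO (G := G) b)) (rep (mkO (G := G) a)) = _
  have h1 : (sig (G := G) a)⁻¹ • a = rep (mkO (G := G) a) :=
    inv_smul_eq_iff.mpr (sig_spec a).symm
  rw [mul_smul, sig_spec, ← h1, cc_smul hnoinv f hconn hacyc hsimp]

include hf in
lemma Ff_of (x y : Gd G V) (e : Arr T x y) :
    (Ff hnoinv hsimp hconn hacyc f).map (ofArr T hf e) = f e := by
  obtain ⟨x⟩ := x
  obtain ⟨y⟩ := y
  obtain ⟨ee, hp, hs, ht⟩ := e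
  obtain ⟨⟨⟨a, b⟩, h⟩, rfl⟩ := Quotient.exists_rep ee
  obtain rfl : mkO (G := G) a = x := hs
  obtain rfl : mkO (G := G) b = y := ht
  have hp' : PosE G T (mkE h) := hp
  have hmain : (Ff hnoinv hsimp hconn hacyc f).map (chi a b) = f (genArr T h hp') := by
    rw [Ff_chi hnoinv hsimp hconn hacyc f a b, cc_single hnoinv hconn hacyc f h.symm,
      phi_symm hnoinv f h, phi, dif_pos hp', inv_inv]
  exact hmain

lemma map_congr (F' : Gd G V ⥤ SingleObj X) {x y x' y' : Gd G V}
    (hx : x = x') (hy : y = y') (g : G) :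
    F'.map (X := x) (Y := y) ⟨g⟩ = F'.map (X := x') (Y := y') ⟨g⟩ := by
  subst hx; subst hy; rfl

include hf hnoinv in
lemma Fmap_chi_adj (F' : Gd G V ⥤ SingleObj X)
    (hF' : ∀ (x y : Gd G V) (e : Arr T x y), F'.map (ofArr T hf e) = f e)
    {u w : V} (h : T.Adj u w) : F'.map (chi w u) = phi hnoinv f h := by
  by_cases hp : PosE G T (mkE h)
  · have h1 : F'.map (chi u w) = f (genArr T h hp) := by
      rw [← ofArr_genArr T hf h hp]; exact hF' _ _ _
    have h3 := F'.map_comp (chi (G := G) u w) (chi w u)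
    rw [chi_comp, chi_id, F'.map_id, SingleObj.comp_as_mul] at h3
    have h4 : F'.map (chi w u) = (F'.map (chi (G := G) u w))⁻¹ := by
      have h5 : F'.map (chi (G := G) w u) * F'.map (chi (G := G) u w) = 1 := by
        rw [← h3]; rfl
      exact eq_inv_of_mul_eq_one_left h5
    rw [h4, h1, phi, dif_pos hp]
  · have hq : PosE G T (mkE h.symm) := by
      rw [← sE_mkE h]
      exact (posE_not hnoinv _).mpr hp
    have h1 : F'.map (chi w u) = f (genArr T h.symm hq) := by
      rw [← ofArr_genArr T hf h.symm hq]; exact hF' _ _ _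
    rw [h1, phi, dif_neg hp]

include hf hnoinv in
lemma Fmap_walk (F' : Gd G V ⥤ SingleObj X)
    (hF' : ∀ (x y : Gd G V) (e : Arr T x y), F'.map (ofArr T hf e) = f e)
    {u v : V} (p : T.Walk u v) : F'.map (chi v u) = wprod hnoinv f p := by
  induction p with
  | nil =>
    rw [chi_id, F'.map_id]
    rfl
  | @cons a b c h q ih =>
    rw [show chi (G := G) c a = chi c b ≫ chi b a from (chi_comp c b a).symm,
      F'.map_comp, SingleObj.comp_as_mul, ih, wprod_cons,
      Fmap_chi_adj hf hnoinv f F' hF' h]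

include hf in
lemma Ff_unique (F' : Gd G V ⥤ SingleObj X)
    (hF' : ∀ (x y : Gd G V) (e : Arr T x y), F'.map (ofArr T hf e) = f e) :
    F' = Ff hnoinv hsimp hconn hacyc f := by
  apply Functor.hext
  · intro x
    rfl
  · intro x y g
    apply heq_of_eq
    obtain ⟨gd⟩ := g
    have hx : toGd (mkO (G := G) (rep x.down)) = x := by
      cases x with
      | up xd => exact congrArg ULift.up (mkO_rep xd)
    have hy : toGd (mkO (G := G) (gd • rep y.down)) = y := by
      cases y with
      | up yd => exact congrArg ULift.up (by rw [mkO_smul, mkO_rep])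
    have hchi : chi (G := G) (rep x.down) (gd • rep y.down) = ⟨gd⟩ := by
      apply congrArg ULift.up
      show (sig (G := G) (rep x.down))⁻¹ * sig (gd • rep y.down) = gd
      rw [sig_smul hf, sig_rep hf, sig_rep hf]
      group
    have h1 : F'.map (X := x) (Y := y) ⟨gd⟩
        = F'.map (X := toGd (mkO (G := G) (rep x.down)))
            (Y := toGd (mkO (G := G) (gd • rep y.down))) ⟨gd⟩ :=
      (map_congr F' hx hy gd).symm
    have hL : F'.map (X := x) (Y := y) ⟨gd⟩
        = cc hnoinv f hconn (gd • rep y.down) (rep x.down) := by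
      rw [h1, ← hchi,
        Fmap_walk hf hnoinv f F' hF' ((hconn.preconnected (gd • rep y.down) (rep x.down)).some),
        wprod_eq hnoinv f hconn hacyc]
    exact hL

include hf hnoinv hsimp hconn hacyc in
lemma unique_lift_aux :
    ∃! F : Gd G V ⥤ SingleObj X, ∀ (x y : Gd G V) (e : Arr T x y),
      F.map (ofArr T hf e) = f e :=
  ⟨Ff hnoinv hsimp hconn hacyc f, Ff_of hf hnoinv hsimp hconn hacyc f,
    fun F' hF' => Ff_unique hf hnoinv hsimp hconn hacyc f F' hF'⟩

end Func

end Stmt1Aux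

open CategoryTheory Stmt1Aux in
/-- A group that acts freely and without inversions on a nonempty tree is a free group. -/
theorem stmt1 {G : Type*} [Group G] {V : Type*} [Nonempty V] (T : SimpleGraph V)
    (hconn : T.Connected) (hacyc : T.IsAcyclic)
    [MulAction G V]
    (hsimp : ∀ (g : G) (u v : V), T.Adj u v → T.Adj (g • u) (g • v))
    (hnoinv : ∀ (g : G) (u v : V), T.Adj u v → ¬ (g • u = v ∧ g • v = u))
    (hfree : ∀ g : G, g ≠ 1 → (∀ v : V, g • v ≠ v) ∧
      (∀ u v : V, T.Adj u v → ¬ (g • u = u ∧ g • v = v))) :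
    IsFreeGroup G := by
  have hf : ∀ (g : G) (v : V), g • v = v → g = 1 := by
    intro g v h
    by_contra hg
    exact (hfree g hg).1 v h
  letI : IsFreeGroupoid (Gd G V) :=
    { quiverGenerators := ⟨fun x y => Arr T x y⟩
      of := fun {a b} e => ofArr T hf e
      unique_lift := fun {X} _ f => unique_lift_aux hf hnoinv hsimp hconn hacyc f }
  haveI : Nonempty (Gd G V) := ⟨⟨mkO (G := G) (Classical.arbitrary V)⟩⟩
  haveI : IsConnected (Gd G V) := by
    apply isConnected_of_zigzag
    intro j1 j2
    exact ⟨[j2], List.Chain.cons (Or.inl ⟨⟨1⟩⟩) List.Chain.nil, rfl⟩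
  let x0 : Gd G V := ⟨mkO (G := G) (Classical.arbitrary V)⟩
  haveI : IsFreeGroup (End x0) := IsFreeGroupoid.endIsFreeOfConnectedFree x0
  let e : End x0 ≃* G :=
    { toFun := fun g => (g.down)⁻¹
      invFun := fun g => ⟨g⁻¹⟩
      left_inv := fun g => by
        show (⟨(g.down⁻¹)⁻¹⟩ : End x0) = g
        rw [inv_inv]
        rfl
      right_inv := fun g => by simp
      map_mul' := fun a b => by
        show ((a * b : End x0)).down⁻¹ = a.down⁻¹ * b.down⁻¹
        show (b.down * a.down)⁻¹ = a.down⁻¹ * b.down⁻¹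
        rw [mul_inv_rev] }
  exact IsFreeGroup.ofMulEquiv e
end

section
/- With r_j and d_n as defined from binary sequences x and y (r_j = 3^(2^(j-1)) or 5^(2^(j-1)) according as the j-th entry is 0 or 1, d_n the product of the first n of them), if d_n(x) = d_n(y) for some n ≥ 1, then x_j = y_j for all 1 ≤ j ≤ n. -/
/-!
The exponent of 3 in `d x n` is the sum of `2 ^ j` over the `j < n` with `x j = 0`, hence
less than `2 ^ n`. So in `d x (n + 1) = d x n * r x n` the exponent of 3 reaches `2 ^ n`
exactly when `x n = 0`: the last factor is read off from `d x (n + 1)`, cancelled, and the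
remaining bits are recovered by induction.
-/

def r (x : ℕ → Fin 2) (j : ℕ) : ℕ :=
  if x j = 0 then 3 ^ (2 ^ j) else 5 ^ (2 ^ j)

def d (x : ℕ → Fin 2) (n : ℕ) : ℕ :=
  ∏ j ∈ Finset.range n, r x j

section

variable (x y : ℕ → Fin 2)

lemma r_ne_zero (j : ℕ) : r x j ≠ 0 := by
  unfold r; split <;> positivity

lemma d_ne_zero (n : ℕ) : d x n ≠ 0 :=
  Finset.prod_ne_zero_iff.mpr fun j _ => r_ne_zero x j

lemma d_succ (n : ℕ) : d x (n + 1) = d x n * r x n :=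
  Finset.prod_range_succ _ _

lemma padicValNat_three_r (j : ℕ) :
    padicValNat 3 (r x j) = if x j = 0 then 2 ^ j else 0 := by
  unfold r
  split
  · exact padicValNat.prime_pow _
  · exact padicValNat.eq_zero_of_not_dvd fun h =>
      absurd (Nat.Prime.dvd_of_dvd_pow Nat.prime_three h) (by norm_num)

lemma padicValNat_three_d_succ (n : ℕ) :
    padicValNat 3 (d x (n + 1)) = padicValNat 3 (d x n) + if x n = 0 then 2 ^ n else 0 := by
  rw [d_succ, padicValNat.mul (d_ne_zero x n) (r_ne_zero x n), padicValNat_three_r]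

lemma padicValNat_three_d_lt (n : ℕ) : padicValNat 3 (d x n) < 2 ^ n := by
  induction n with
  | zero => simp [d]
  | succ n ih =>
    rw [padicValNat_three_d_succ, pow_succ]
    split <;> omega

lemma eq_zero_iff_le_padicValNat_three_d_succ (n : ℕ) :
    x n = 0 ↔ 2 ^ n ≤ padicValNat 3 (d x (n + 1)) := by
  have := padicValNat_three_d_lt x n
  rw [padicValNat_three_d_succ]
  split <;> simp_all

lemma eq_of_d_succ_eq {n : ℕ} (h : d x (n + 1) = d y (n + 1)) : x n = y n := by
  have hzero : x n = 0 ↔ y n = 0 := by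
    rw [eq_zero_iff_le_padicValNat_three_d_succ, eq_zero_iff_le_padicValNat_three_d_succ, h]
  revert hzero
  generalize x n = a
  generalize y n = b
  revert a b
  decide

lemma d_eq_of_d_succ_eq {n : ℕ} (h : d x (n + 1) = d y (n + 1)) : d x n = d y n := by
  have hr : r x n = r y n := by unfold r; rw [eq_of_d_succ_eq x y h]
  rw [d_succ, d_succ, hr] at h
  exact Nat.eq_of_mul_eq_mul_right (Nat.pos_of_ne_zero (r_ne_zero y n)) h

end

theorem stmt6_general (x y : ℕ → Fin 2) (n : ℕ) (h : d x n = d y n) :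
    ∀ j < n, x j = y j := by
  induction n with
  | zero => intro j hj; omega
  | succ n ih =>
    intro j hj
    rcases Nat.lt_succ_iff_lt_or_eq.mp hj with hj | rfl
    · exact ih (d_eq_of_d_succ_eq x y h) j hj
    · exact eq_of_d_succ_eq x y h

/-- If `d_n(x) = d_n(y)` for some `n ≥ 1`, then the first `n` bits of `x` and `y` agree. -/
theorem stmt6 (x y : ℕ → Fin 2) (n : ℕ) (hn : 1 ≤ n) (h : d x n = d y n) :
    ∀ j < n, x j = y j :=
  stmt6_general x y n h
end

section
/- Let S be the set of binary sequences of the form φ(x) consisting of runs of 0's of lengths d_1(x), d_2(x), d_3(x), ... separated by single 1's, where d_n(x) = ∏_{j=1}^n r_j(x) and r_j(x) = 3^(2^(j-1)) if x_j = 0, r_j(x) = 5^(2^(j-1)) if x_j = 1. If s = φ(x) and t = φ(y) satisfy s_{a+m} = t_{b+m} for all m > 0 for some a, b, then x = y (and hence s = t). -/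
/-!
The `1`'s of `phi x` sit at the positions `onePos x n`, whose consecutive gaps are
`d x (n + 2) + 1`. If two such sequences agree after a shift, so do their sets of
`1`-positions, and then the gaps agree from some index on: `d x (i + k) = d y (j + k)`.
Now `d x n = 3 ^ A * 5 ^ B`, where `A` and `B` are the sums of the `2 ^ j`, `j < n`, with
`x j = 0` and `x j = 1` respectively, so `A + B = 2 ^ n - 1`. Unique factorization gives
`i = j`, and then uniqueness of binary expansions recovers `x j` from `A`.
-/

open scoped Classical

/-- `phi x` is the binary sequence `0^{d_1} 1 0^{d_2} 1 0^{d_3} 1 ⋯`: the `(n+1)`-st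
`1` occurs at (0-indexed) position `d_1 + ⋯ + d_{n+1} + n`. -/
noncomputable def phi (x : ℕ → Fin 2) (k : ℕ) : Fin 2 :=
  if ∃ n : ℕ, k = (∑ j ∈ Finset.range (n + 1), d x (j + 1)) + n then 1 else 0

open Finset

section ShiftedRanges

variable {f g : ℕ → ℕ} {a b : ℕ}

theorem StrictMono.succ_add_le_of_range_shift (hf : StrictMono f) (hg : StrictMono g)
    (hfg : ∀ m, 0 < m → a + m ∈ Set.range f → b + m ∈ Set.range g)
    {i j : ℕ} (hij : f i + b = g j + a) (ha : a ≤ f i) :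
    g (j + 1) + a ≤ f (i + 1) + b := by
  have hfi := hf (lt_add_one i)
  obtain ⟨j', hj'⟩ := hfg (f (i + 1) - a) (by omega) ⟨i + 1, by omega⟩
  have hjj' : j < j' := hg.lt_iff_lt.mp (by omega)
  have := hg.monotone (show j + 1 ≤ j' from hjj')
  omega

theorem StrictMono.exists_add_eq_add_of_range_shift (hf : StrictMono f) (hg : StrictMono g)
    (hfg : ∀ m, 0 < m → (a + m ∈ Set.range f ↔ b + m ∈ Set.range g)) :
    ∃ i j, ∀ k, f (i + k) + b = g (j + k) + a := by
  have ha : a < f (a + 1) := (lt_add_one a).trans_le hf.le_apply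
  obtain ⟨j, hj⟩ := (hfg (f (a + 1) - a) (by omega)).mp ⟨a + 1, by omega⟩
  refine ⟨a + 1, j, fun k => ?_⟩
  induction k with
  | zero => rw [add_zero, add_zero, hj]; omega
  | succ k ih =>
    have hak : a ≤ f (a + 1 + k) := ha.le.trans (hf.monotone (by omega))
    have h₁ := hf.succ_add_le_of_range_shift hg (fun m hm => (hfg m hm).mp) ih hak
    have h₂ := hg.succ_add_le_of_range_shift hf (fun m hm => (hfg m hm).mpr) ih.symm (by omega)
    rw [← add_assoc, ← add_assoc]
    omega

end ShiftedRanges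

theorem Fin.eq_of_eq_zero_iff {u v : Fin 2} (h : u = 0 ↔ v = 0) : u = v := by
  revert u v
  decide

section Phi

variable (x y : ℕ → Fin 2)

theorem d_eq_three_pow_mul_five_pow (n : ℕ) :
    d x n = 3 ^ (∑ j ∈ range n with x j = 0, 2 ^ j) *
      5 ^ (∑ j ∈ range n with ¬x j = 0, 2 ^ j) := by
  rw [d, ← prod_pow_eq_pow_sum, ← prod_pow_eq_pow_sum, ← prod_ite]
  rfl

theorem eq_and_eq_of_three_pow_mul_five_pow_eq {a b c e : ℕ} (h : 3 ^ a * 5 ^ b = 3 ^ c * 5 ^ e) :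
    a = c ∧ b = e := by
  have h3 := congrArg (·.factorization 3) h
  have h5 := congrArg (·.factorization 5) h
  simp [Nat.factorization_mul, Nat.prime_three, Nat.prime_five] at h3 h5
  exact ⟨h3, h5⟩

theorem index_eq_of_d_eq {n m : ℕ} (h : d x n = d y m) : n = m := by
  rw [d_eq_three_pow_mul_five_pow, d_eq_three_pow_mul_five_pow] at h
  obtain ⟨h3, h5⟩ := eq_and_eq_of_three_pow_mul_five_pow_eq h
  have := sum_filter_add_sum_filter_not (range n) (x · = 0) (2 ^ ·)
  rw [h3, h5, sum_filter_add_sum_filter_not] at this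
  simpa using congrArg card (geomSum_injective le_rfl this.symm)

theorem eq_of_forall_ge_d_eq (N : ℕ) (h : ∀ n ≥ N, d x n = d y n) : x = y := by
  funext j
  have hd := h (max N (j + 1)) (le_max_left _ _)
  rw [d_eq_three_pow_mul_five_pow, d_eq_three_pow_mul_five_pow] at hd
  have hzero :=
    congrArg (j ∈ ·) (geomSum_injective le_rfl (eq_and_eq_of_three_pow_mul_five_pow_eq hd).1)
  have hj : j < max N (j + 1) := by omega
  simp only [mem_filter, mem_range, hj, true_and, eq_iff_iff] at hzero
  exact Fin.eq_of_eq_zero_iff hzero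

def onePos (n : ℕ) : ℕ := ∑ j ∈ range (n + 1), d x (j + 1) + n

theorem phi_eq_one_iff (k : ℕ) : phi x k = 1 ↔ k ∈ Set.range (onePos x) := by
  simp only [phi, onePos, Set.mem_range, eq_comm (a := k)]
  split_ifs with hk <;> simp [hk]

theorem onePos_succ (n : ℕ) : onePos x (n + 1) = onePos x n + d x (n + 2) + 1 := by
  simp only [onePos, sum_range_succ]
  ring

theorem d_pos (n : ℕ) : 0 < d x n :=
  prod_pos fun j _ => by unfold r; split <;> positivity

theorem onePos_strictMono : StrictMono (onePos x) :=
  strictMono_nat_of_lt_succ fun n => by have := d_pos x (n + 2); rw [onePos_succ]; omega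

end Phi

/-- If `phi x` and `phi y` agree after shifts (for all `m > 0`), then `x = y`
(and hence `phi x = phi y`). -/
theorem stmt11 (x y : ℕ → Fin 2) (a b : ℕ)
    (h : ∀ m : ℕ, 0 < m → phi x (a + m) = phi y (b + m)) :
    x = y ∧ phi x = phi y := by
  have hrange (m : ℕ) (hm : 0 < m) :
      a + m ∈ Set.range (onePos x) ↔ b + m ∈ Set.range (onePos y) := by
    rw [← phi_eq_one_iff, ← phi_eq_one_iff, h m hm]
  obtain ⟨i, j, hij⟩ :=
    (onePos_strictMono x).exists_add_eq_add_of_range_shift (onePos_strictMono y) hrange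
  have hd (k : ℕ) : d x (i + k + 2) = d y (j + k + 2) := by
    have := hij (k + 1)
    rw [← add_assoc, ← add_assoc, onePos_succ, onePos_succ] at this
    have := hij k
    omega
  obtain rfl : i = j := by simpa using index_eq_of_d_eq x y (hd 0)
  have hxy : x = y := eq_of_forall_ge_d_eq x y (i + 2) fun n hn => by
    obtain ⟨k, rfl⟩ := Nat.exists_eq_add_of_le hn
    simpa [add_right_comm] using hd k
  exact ⟨hxy, hxy ▸ rfl⟩
end
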